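/- arXiv:2403.13691 — 5 statements merged into one kernel-verified Lean document; each statement's English description precedes it below -/
import Mathlib

section
/- Let a ∈ (0,1], b ∈ ℝ, c > 0 and define α(k) = k^b·exp(2c·k^a) for k ≥ 1. Then there is a constant C (depending on a, b, c) such that for all K ≥ 1, ∑_{k=1}^{K} α(k) ≤ C · K^{1-a} · α(K). -/
open Real Finset

-- x^n / n! ≤ exp x
lemma aux_pow_le_exp (n : ℕ) {x : ℝ} (hx : 0 ≤ x) : x ^ n / n.factorial ≤ Real.exp x := by
  refine le_trans ?_ (Real.sum_le_exp_of_nonneg hx (n+1))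
  exact Finset.single_le_sum (f := fun i => x ^ i / i.factorial)
    (fun i _ => by positivity) (Finset.self_mem_range_succ n)

-- concavity: a * y^(a-1) * (y - x) ≤ y^a - x^a, for 0 < x ≤ y, 0 < a ≤ 1
lemma aux_concave {a : ℝ} (ha0 : 0 < a) (ha1 : a ≤ 1) {x y : ℝ} (hx : 0 < x) (hxy : x ≤ y) :
    a * y ^ (a - 1) * (y - x) ≤ y ^ a - x ^ a := by
  have hy : 0 < y := hx.trans_le hxy
  have hs : (0:ℝ) ≤ x / y := by positivity
  have h1 := Real.geom_mean_le_arith_mean2_weighted (w₁ := a) (w₂ := 1 - a)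
    (p₁ := x / y) (p₂ := 1) ha0.le (by linarith) hs zero_le_one (by ring)
  simp only [Real.one_rpow, mul_one] at h1
  -- h1 : (x/y)^a ≤ a * (x/y) + (1-a)
  have h2 : (x / y) ^ a = x ^ a / y ^ a := Real.div_rpow hx.le hy.le a
  have h3 : y ^ (a - 1) = y ^ a / y := by
    rw [Real.rpow_sub hy, Real.rpow_one]
  have hya : (0:ℝ) < y ^ a := Real.rpow_pos_of_pos hy a
  rw [h2] at h1
  have h4 : x ^ a ≤ a * (x / y) * y ^ a + (1 - a) * y ^ a := by
    calc x ^ a = x ^ a / y ^ a * y ^ a := by field_simp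
    _ ≤ (a * (x / y) + (1 - a)) * y ^ a := by
        apply mul_le_mul_of_nonneg_right h1 hya.le
    _ = a * (x / y) * y ^ a + (1 - a) * y ^ a := by ring
  have h5 : a * (x / y) * y ^ a = a * x * y ^ (a - 1) := by
    rw [h3]; field_simp
  have h6 : y ^ a = y ^ (a - 1) * y := by rw [h3]; field_simp
  nlinarith [h4, h5, h6]

-- term comparison: x^b exp(c x^a) ≤ C₀ * (y^b exp(c y^a)) for 1 ≤ x ≤ y
lemma aux_term_cmp (a b c : ℝ) (ha0 : 0 < a) (hc : 0 < c) :
    ∃ C₀ : ℝ, 0 < C₀ ∧ ∀ x y : ℝ, 1 ≤ x → x ≤ y →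
      x ^ b * Real.exp (c * x ^ a) ≤ C₀ * (y ^ b * Real.exp (c * y ^ a)) := by
  rcases le_or_gt 0 b with hb | hb
  · refine ⟨1, one_pos, fun x y hx hxy => ?_⟩
    rw [one_mul]
    have hx0 : (0:ℝ) < x := lt_of_lt_of_le one_pos hx
    have h1 : x ^ b ≤ y ^ b := Real.rpow_le_rpow hx0.le hxy hb
    have h2 : x ^ a ≤ y ^ a := Real.rpow_le_rpow hx0.le hxy ha0.le
    have := Real.exp_le_exp.2 (mul_le_mul_of_nonneg_left h2 hc.le)
    exact mul_le_mul h1 this (Real.exp_pos _).le (Real.rpow_nonneg (hx0.le.trans hxy) b)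
  · set d : ℝ := -b with hd
    have hd0 : 0 < d := by rw [hd]; linarith
    set n : ℕ := ⌈d / a⌉₊ with hn
    have hna : d ≤ n * a := by
      have := Nat.le_ceil (d / a)
      calc d = d / a * a := by field_simp
      _ ≤ n * a := by apply mul_le_mul_of_nonneg_right this ha0.le
    set C₀ : ℝ := Real.exp c * n.factorial / c ^ n with hC₀
    have hC₀pos : 0 < C₀ := by positivity
    refine ⟨C₀, hC₀pos, fun x y hx hxy => ?_⟩
    have hx0 : (0:ℝ) < x := lt_of_lt_of_le one_pos hx
    have hy0 : (0:ℝ) < y := hx0.trans_le hxy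
    set t : ℝ := y / x with ht
    have ht1 : 1 ≤ t := (one_le_div hx0).2 hxy
    have ht0 : 0 < t := lt_of_lt_of_le one_pos ht1
    have hxa1 : 1 ≤ x ^ a := Real.one_le_rpow hx ha0.le
    have hta1 : 1 ≤ t ^ a := Real.one_le_rpow ht1 ha0.le
    have hyx : y = x * t := by rw [ht]; field_simp
    have hya : y ^ a = x ^ a * t ^ a := by
      rw [hyx, Real.mul_rpow hx0.le ht0.le]
    -- key : t ^ d ≤ C₀ * exp (c * (y^a - x^a))
    have key : t ^ d ≤ C₀ * Real.exp (c * (y ^ a - x ^ a)) := by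
      have s1 : t ^ d ≤ t ^ ((n : ℝ) * a) :=
        Real.rpow_le_rpow_of_exponent_le ht1 hna
      have s2 : t ^ ((n : ℝ) * a) = (t ^ a) ^ n := by
        rw [mul_comm, Real.rpow_mul ht0.le, Real.rpow_natCast]
      have s3 : (t ^ a) ^ n ≤ (n.factorial : ℝ) / c ^ n * Real.exp (c * t ^ a) := by
        have := aux_pow_le_exp n (x := c * t ^ a) (by positivity)
        rw [mul_pow] at this
        rw [div_mul_eq_mul_div, le_div_iff₀ (by positivity : (0:ℝ) < c ^ n)]
        rw [div_le_iff₀ (by positivity : (0:ℝ) < (n.factorial : ℝ))] at this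
        linarith [this]
      have s4 : Real.exp (c * t ^ a) ≤ Real.exp c * Real.exp (c * (y ^ a - x ^ a)) := by
        rw [← Real.exp_add, Real.exp_le_exp]
        have : t ^ a - 1 ≤ y ^ a - x ^ a := by
          rw [hya]; nlinarith
        nlinarith
      calc t ^ d ≤ (t ^ a) ^ n := by rw [← s2]; exact s1
      _ ≤ (n.factorial : ℝ) / c ^ n * Real.exp (c * t ^ a) := s3
      _ ≤ (n.factorial : ℝ) / c ^ n * (Real.exp c * Real.exp (c * (y ^ a - x ^ a))) := by
          apply mul_le_mul_of_nonneg_left s4 (by positivity)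
      _ = C₀ * Real.exp (c * (y ^ a - x ^ a)) := by rw [hC₀]; ring
    have hyd2 : y ^ d = x ^ d * t ^ d := by rw [hyx, Real.mul_rpow hx0.le ht0.le]
    have hxd : x ^ b = (x ^ d)⁻¹ := by rw [hd, Real.rpow_neg hx0.le, inv_inv]
    have hyd : y ^ b = (y ^ d)⁻¹ := by rw [hd, Real.rpow_neg hy0.le, inv_inv]
    have hxdp : 0 < x ^ d := Real.rpow_pos_of_pos hx0 d
    have hydp : 0 < y ^ d := Real.rpow_pos_of_pos hy0 d
    have hexp : Real.exp (c * (y ^ a - x ^ a)) * Real.exp (c * x ^ a)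
        = Real.exp (c * y ^ a) := by
      rw [← Real.exp_add]; congr 1; ring
    have key2 : t ^ d * Real.exp (c * x ^ a) ≤ C₀ * Real.exp (c * y ^ a) := by
      calc t ^ d * Real.exp (c * x ^ a)
          ≤ C₀ * Real.exp (c * (y ^ a - x ^ a)) * Real.exp (c * x ^ a) :=
            mul_le_mul_of_nonneg_right key (Real.exp_pos _).le
      _ = C₀ * Real.exp (c * y ^ a) := by rw [mul_assoc, hexp]
    have goal' : Real.exp (c * x ^ a) / x ^ d ≤ C₀ * Real.exp (c * y ^ a) / y ^ d := by
      rw [div_le_div_iff₀ hxdp hydp, hyd2]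
      calc Real.exp (c * x ^ a) * (x ^ d * t ^ d)
          = t ^ d * Real.exp (c * x ^ a) * x ^ d := by ring
      _ ≤ C₀ * Real.exp (c * y ^ a) * x ^ d :=
          mul_le_mul_of_nonneg_right key2 hxdp.le
    rw [hxd, hyd]
    have e1 : (x ^ d)⁻¹ * Real.exp (c * x ^ a) = Real.exp (c * x ^ a) / x ^ d := by ring
    have e2 : C₀ * ((y ^ d)⁻¹ * Real.exp (c * y ^ a)) = C₀ * Real.exp (c * y ^ a) / y ^ d := by
      ring
    rw [e1, e2]; exact goal'

lemma aux_geom (a c : ℝ) (ha0 : 0 < a) (ha1 : a ≤ 1) (hc : 0 < c) (K : ℕ) (hK : 1 ≤ K) :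
    ∑ k ∈ Finset.Icc 1 K, Real.exp (c * (k : ℝ) ^ a)
      ≤ Real.exp (c * a) / (c * a) * (K : ℝ) ^ (1 - a) * Real.exp (c * (K : ℝ) ^ a) := by
  have hK0 : (0:ℝ) < K := by exact_mod_cast Nat.lt_of_lt_of_le Nat.zero_lt_one hK
  have hK1 : (1:ℝ) ≤ K := by exact_mod_cast hK
  set x : ℝ := c * a * (K : ℝ) ^ (a - 1) with hxdef
  have hx0 : 0 < x := by
    have := Real.rpow_pos_of_pos hK0 (a - 1); positivity
  set r : ℝ := Real.exp (-x) with hrdef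
  have hr0 : 0 < r := Real.exp_pos _
  have hr1 : r < 1 := Real.exp_lt_one_iff.2 (by linarith)
  -- termwise bound
  have hterm : ∀ k ∈ Finset.Icc 1 K, Real.exp (c * (k : ℝ) ^ a)
      ≤ Real.exp (c * (K : ℝ) ^ a) * r ^ (K - k) := by
    intro k hk
    rw [Finset.mem_Icc] at hk
    have hk1 : (1:ℝ) ≤ k := by exact_mod_cast hk.1
    have hkK : (k:ℝ) ≤ K := by exact_mod_cast hk.2
    have hcast : ((K - k : ℕ) : ℝ) = (K:ℝ) - k := by
      rw [Nat.cast_sub hk.2]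
    have hconc := aux_concave ha0 ha1 (lt_of_lt_of_le one_pos hk1) hkK
    have hrpow : r ^ (K - k) = Real.exp (((K - k : ℕ) : ℝ) * (-x)) := by
      rw [Real.exp_nat_mul]
    rw [hrpow, ← Real.exp_add, Real.exp_le_exp, hcast]
    have : x * ((K:ℝ) - k) ≤ c * ((K:ℝ) ^ a - (k:ℝ) ^ a) := by
      rw [hxdef]
      calc c * a * (K:ℝ) ^ (a-1) * ((K:ℝ) - k) = c * (a * (K:ℝ) ^ (a-1) * ((K:ℝ) - k)) := by
            ring
      _ ≤ c * ((K:ℝ) ^ a - (k:ℝ) ^ a) := mul_le_mul_of_nonneg_left hconc hc.le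
    nlinarith
  -- sum of the geometric terms
  have hsum : ∑ k ∈ Finset.Icc 1 K, r ^ (K - k) = ∑ j ∈ Finset.range K, r ^ j := by
    apply Finset.sum_nbij' (fun k => K - k) (fun j => K - j)
    · intro k hk
      rw [Finset.mem_Icc] at hk
      simp only [Finset.mem_range]
      omega
    · intro j hj
      rw [Finset.mem_range] at hj
      rw [Finset.mem_Icc]
      omega
    · intro k hk
      rw [Finset.mem_Icc] at hk
      omega
    · intro j hj
      rw [Finset.mem_range] at hj
      omega
    · intro k hk
      rfl
  have hgeom : ∑ j ∈ Finset.range K, r ^ j ≤ 1 / (1 - r) := by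
    rw [geom_sum_eq hr1.ne]
    have e : (r ^ K - 1) / (r - 1) = (1 - r ^ K) / (1 - r) := by
      rw [← neg_div_neg_eq]; ring_nf
    rw [e]
    have h1 : (1:ℝ) - r ^ K ≤ 1 := by nlinarith [pow_nonneg hr0.le K]
    gcongr
  -- bound 1/(1-r)
  have hxle : x ≤ c * a := by
    have : (K:ℝ) ^ (a - 1) ≤ 1 :=
      Real.rpow_le_one_of_one_le_of_nonpos hK1 (by linarith)
    calc x = c * a * (K:ℝ) ^ (a-1) := hxdef
    _ ≤ c * a * 1 := by apply mul_le_mul_of_nonneg_left this (by positivity)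
    _ = c * a := by ring
  have hlow : x * Real.exp (-(c * a)) ≤ 1 - r := by
    have h1 : x * Real.exp (-x) ≤ 1 - Real.exp (-x) := by
      have hm : Real.exp x * Real.exp (-x) = 1 := by rw [← Real.exp_add]; norm_num
      nlinarith [Real.add_one_le_exp x, Real.exp_pos (-x), hm]
    have h2 : Real.exp (-(c * a)) ≤ Real.exp (-x) := Real.exp_le_exp.2 (by linarith)
    calc x * Real.exp (-(c * a)) ≤ x * Real.exp (-x) :=
        mul_le_mul_of_nonneg_left h2 hx0.le
    _ ≤ 1 - Real.exp (-x) := h1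
    _ = 1 - r := by rw [hrdef]
  have hlowpos : 0 < x * Real.exp (-(c * a)) := by positivity
  have hfinal : 1 / (1 - r) ≤ Real.exp (c * a) / (c * a) * (K:ℝ) ^ (1 - a) := by
    have h3 : 1 / (1 - r) ≤ 1 / (x * Real.exp (-(c * a))) :=
      one_div_le_one_div_of_le hlowpos hlow
    have h4 : 1 / (x * Real.exp (-(c * a))) = Real.exp (c * a) / (c * a) * (K:ℝ) ^ (1 - a) := by
      have hKa : (K:ℝ) ^ (1 - a) * (K:ℝ) ^ (a - 1) = 1 := by
        rw [← Real.rpow_add hK0]; norm_num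
      have hexp : Real.exp (-(c * a)) * Real.exp (c * a) = 1 := by
        rw [← Real.exp_add]; norm_num
      have hmul : (c * a * (K:ℝ) ^ (a-1) * Real.exp (-(c*a)))
          * (Real.exp (c * a) / (c * a) * (K:ℝ) ^ (1 - a)) = 1 := by
        calc (c * a * (K:ℝ) ^ (a-1) * Real.exp (-(c*a)))
            * (Real.exp (c * a) / (c * a) * (K:ℝ) ^ (1 - a))
            = (Real.exp (-(c*a)) * Real.exp (c*a)) * ((K:ℝ) ^ (1-a) * (K:ℝ) ^ (a-1))
              * ((c * a) / (c * a)) := by ring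
        _ = 1 := by
            rw [hKa, hexp, div_self (by positivity : (c*a:ℝ) ≠ 0)]; norm_num
      rw [hxdef]
      exact eq_one_div_of_mul_eq_one_right hmul ▸ (eq_one_div_of_mul_eq_one_right hmul)
    rw [h4] at h3; exact h3
  calc ∑ k ∈ Finset.Icc 1 K, Real.exp (c * (k : ℝ) ^ a)
      ≤ ∑ k ∈ Finset.Icc 1 K, Real.exp (c * (K : ℝ) ^ a) * r ^ (K - k) :=
        Finset.sum_le_sum hterm
  _ = Real.exp (c * (K : ℝ) ^ a) * ∑ k ∈ Finset.Icc 1 K, r ^ (K - k) := by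
      rw [Finset.mul_sum]
  _ = Real.exp (c * (K : ℝ) ^ a) * ∑ j ∈ Finset.range K, r ^ j := by rw [hsum]
  _ ≤ Real.exp (c * (K : ℝ) ^ a) * (1 / (1 - r)) :=
      mul_le_mul_of_nonneg_left hgeom (Real.exp_pos _).le
  _ ≤ Real.exp (c * (K : ℝ) ^ a) * (Real.exp (c * a) / (c * a) * (K:ℝ) ^ (1 - a)) :=
      mul_le_mul_of_nonneg_left hfinal (Real.exp_pos _).le
  _ = Real.exp (c * a) / (c * a) * (K : ℝ) ^ (1 - a) * Real.exp (c * (K : ℝ) ^ a) := by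
      ring

/-- Summation estimate: for `a ∈ (0,1]`, `b ∈ ℝ`, `c > 0` and `α(k) = k^b exp(2c k^a)`,
there is a constant `C` such that `∑_{k=1}^K α(k) ≤ C K^{1-a} α(K)` for all `K ≥ 1`. -/
theorem sum_alpha_le (a b c : ℝ) (ha0 : 0 < a) (ha1 : a ≤ 1) (hc : 0 < c) :
    ∃ C : ℝ, 0 < C ∧ ∀ K : ℕ, 1 ≤ K →
      ∑ k ∈ Finset.Icc 1 K, (k : ℝ) ^ b * Real.exp (2 * c * (k : ℝ) ^ a)
        ≤ C * (K : ℝ) ^ (1 - a) * ((K : ℝ) ^ b * Real.exp (2 * c * (K : ℝ) ^ a)) := by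
  obtain ⟨C₀, hC₀pos, hC₀⟩ := aux_term_cmp a b c ha0 hc
  refine ⟨C₀ * (Real.exp (c * a) / (c * a)), by positivity, fun K hK => ?_⟩
  have hK1 : (1:ℝ) ≤ K := by exact_mod_cast hK
  have hsplit : ∀ z : ℝ, Real.exp (2 * c * z) = Real.exp (c * z) * Real.exp (c * z) := by
    intro z; rw [← Real.exp_add]; congr 1; ring
  have step1 : ∀ k ∈ Finset.Icc 1 K, (k : ℝ) ^ b * Real.exp (2 * c * (k : ℝ) ^ a)
      ≤ C₀ * ((K : ℝ) ^ b * Real.exp (c * (K : ℝ) ^ a)) * Real.exp (c * (k : ℝ) ^ a) := by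
    intro k hk
    rw [Finset.mem_Icc] at hk
    have hk1 : (1:ℝ) ≤ k := by exact_mod_cast hk.1
    have hkK : (k:ℝ) ≤ K := by exact_mod_cast hk.2
    rw [hsplit ((k:ℝ) ^ a)]
    calc (k : ℝ) ^ b * (Real.exp (c * (k : ℝ) ^ a) * Real.exp (c * (k : ℝ) ^ a))
        = ((k : ℝ) ^ b * Real.exp (c * (k : ℝ) ^ a)) * Real.exp (c * (k : ℝ) ^ a) := by ring
    _ ≤ (C₀ * ((K : ℝ) ^ b * Real.exp (c * (K : ℝ) ^ a))) * Real.exp (c * (k : ℝ) ^ a) :=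
        mul_le_mul_of_nonneg_right (hC₀ (k:ℝ) (K:ℝ) hk1 hkK) (Real.exp_pos _).le
  calc ∑ k ∈ Finset.Icc 1 K, (k : ℝ) ^ b * Real.exp (2 * c * (k : ℝ) ^ a)
      ≤ ∑ k ∈ Finset.Icc 1 K,
          C₀ * ((K : ℝ) ^ b * Real.exp (c * (K : ℝ) ^ a)) * Real.exp (c * (k : ℝ) ^ a) :=
        Finset.sum_le_sum step1
  _ = C₀ * ((K : ℝ) ^ b * Real.exp (c * (K : ℝ) ^ a))
        * ∑ k ∈ Finset.Icc 1 K, Real.exp (c * (k : ℝ) ^ a) := by rw [Finset.mul_sum]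
  _ ≤ C₀ * ((K : ℝ) ^ b * Real.exp (c * (K : ℝ) ^ a))
        * (Real.exp (c * a) / (c * a) * (K : ℝ) ^ (1 - a) * Real.exp (c * (K : ℝ) ^ a)) := by
      apply mul_le_mul_of_nonneg_left (aux_geom a c ha0 ha1 hc K hK)
      have := Real.rpow_pos_of_pos (lt_of_lt_of_le one_pos hK1) b
      positivity
  _ = C₀ * (Real.exp (c * a) / (c * a)) * (K : ℝ) ^ (1 - a)
        * ((K : ℝ) ^ b * Real.exp (2 * c * (K : ℝ) ^ a)) := by
      rw [hsplit ((K:ℝ) ^ a)]; ring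
end

section
/- Let a ∈ (0,1], b ∈ ℝ, c > 0, α(k) = k^b exp(2c k^a), and ρ(s) = s log(s+2). Then there is a constant C such that for every sequence (x_k)_{k≥1} of reals with sup_k |x_k| ≤ 1 and every K ≥ 1: ρ(∑_{k=1}^K α(k)|x_k|²) ≤ C ∑_{k=1}^K ρ(α(k)) |x_k|². -/
/-!
From `log (1 + t) ≤ t`, the function `ρ(s) = s log(s + 2)` satisfies
`ρ(u + v) ≤ ρ(u) + v + v log(u + v + 2)`, so adding the term `v = α(K) x_K²` to the partial sum `u` costs at most `v + v log(∑_{k ≤ K} α(k) + 2)`.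
Because `α` grows super-polynomially, `log(∑_{k ≤ K} α(k) + 2) ≲ K^a ≲ log(α(K) + 2)`, so this
cost is `≲ ρ(α(K)) x_K²` and the inequality follows by induction on `K`.
-/

open Real Finset

theorem add_mul_log_add_two_le {u v : ℝ} (hu : 0 ≤ u) (hv : 0 ≤ v) :
    (u + v) * log (u + v + 2) ≤ u * log (u + 2) + v + v * log (u + v + 2) := by
  have hlog : log (u + v + 2) - log (u + 2) ≤ v / (u + 2) := by
    rw [← log_div (by positivity) (by positivity)]
    calc log ((u + v + 2) / (u + 2)) ≤ (u + v + 2) / (u + 2) - 1 :=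
          log_le_sub_one_of_pos (by positivity)
      _ = v / (u + 2) := by field_simp; ring
  have hfrac : u * (v / (u + 2)) ≤ v := by
    rw [mul_div_assoc', div_le_iff₀ (by positivity)]
    nlinarith
  have := mul_le_mul_of_nonneg_left hlog hu
  rw [mul_sub] at this
  linarith

theorem sum_mul_log_sum_add_two_le {α w : ℕ → ℝ} {C₀ : ℝ} (hα : ∀ k, 0 ≤ α k)
    (hw₀ : ∀ k, 0 ≤ w k) (hw₁ : ∀ k, w k ≤ 1)
    (hlog : ∀ K, 1 ≤ K → log (∑ k ∈ Icc 1 K, α k + 2) ≤ C₀ * log (α K + 2)) (K : ℕ) :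
    (∑ k ∈ Icc 1 K, α k * w k) * log (∑ k ∈ Icc 1 K, α k * w k + 2) ≤
      (C₀ + 1 / log 2) * ∑ k ∈ Icc 1 K, α k * log (α k + 2) * w k := by
  induction K with
  | zero => simp
  | succ K ih =>
    have hK : 1 ≤ K + 1 := Nat.le_add_left 1 K
    rw [sum_Icc_succ_top hK, sum_Icc_succ_top hK]
    set u := ∑ k ∈ Icc 1 K, α k * w k
    set v := α (K + 1) * w (K + 1)
    set L := log (α (K + 1) + 2)
    have hu : 0 ≤ u := sum_nonneg fun k _ => mul_nonneg (hα k) (hw₀ k)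
    have hv : 0 ≤ v := mul_nonneg (hα _) (hw₀ _)
    have hL : log 2 ≤ L := log_le_log (by norm_num) (by linarith [hα (K + 1)])
    have huv : u + v ≤ ∑ k ∈ Icc 1 (K + 1), α k := by
      rw [sum_Icc_succ_top hK]
      exact add_le_add (sum_le_sum fun k _ => mul_le_of_le_one_right (hα k) (hw₁ k))
        (mul_le_of_le_one_right (hα _) (hw₁ _))
    have hcross : v * log (u + v + 2) ≤ C₀ * (v * L) :=
      calc v * log (u + v + 2) ≤ v * log (∑ k ∈ Icc 1 (K + 1), α k + 2) := by
            gcongr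
        _ ≤ v * (C₀ * L) := mul_le_mul_of_nonneg_left (hlog _ hK) hv
        _ = C₀ * (v * L) := by ring
    have hlin : v ≤ 1 / log 2 * (v * L) := by
      rw [one_div_mul_eq_div, le_div_iff₀ (log_pos one_lt_two)]
      exact mul_le_mul_of_nonneg_left hL hv
    calc (u + v) * log (u + v + 2) ≤ u * log (u + 2) + v + v * log (u + v + 2) :=
          add_mul_log_add_two_le hu hv
      _ ≤ (C₀ + 1 / log 2) * ∑ k ∈ Icc 1 K, α k * log (α k + 2) * w k
            + 1 / log 2 * (v * L) + C₀ * (v * L) := by linarith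
      _ = _ := by ring

theorem exists_log_le_mul_rpow_add {a ε : ℝ} (ha : 0 < a) (hε : 0 < ε) :
    ∃ D, ∀ x : ℝ, 0 < x → log x ≤ ε * x ^ a + D := by
  refine ⟨-(1 + log (a * ε)) / a, fun x hx => le_of_mul_le_mul_left ?_ ha⟩
  have key := log_le_sub_one_of_pos (x := a * ε * x ^ a) (by positivity)
  rw [log_mul (by positivity) (by positivity), log_rpow hx] at key
  calc a * log x ≤ a * ε * x ^ a - 1 - log (a * ε) := by linarith
    _ = a * (ε * x ^ a + -(1 + log (a * ε)) / a) := by field_simp; ring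

/-- The weight `α` of the statement. -/
noncomputable def expWeight (a b c t : ℝ) : ℝ := t ^ b * exp (2 * c * t ^ a)

theorem expWeight_nonneg (a b c : ℝ) {t : ℝ} (ht : 0 ≤ t) : 0 ≤ expWeight a b c t :=
  mul_nonneg (rpow_nonneg ht b) (exp_pos _).le

theorem expWeight_pos (a b c : ℝ) {t : ℝ} (ht : 0 < t) : 0 < expWeight a b c t :=
  mul_pos (rpow_pos_of_pos ht b) (exp_pos _)

theorem log_expWeight (a b c : ℝ) {t : ℝ} (ht : 0 < t) :
    log (expWeight a b c t) = b * log t + 2 * c * t ^ a := by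
  rw [expWeight, log_mul (by positivity) (exp_pos _).ne', log_rpow ht, log_exp]

theorem expWeight_le {a b c t T : ℝ} (ha : 0 ≤ a) (hc : 0 ≤ c) (ht : 1 ≤ t) (htT : t ≤ T) :
    expWeight a b c t ≤ T ^ |b| * exp (2 * c * T ^ a) := by
  have hpow : t ^ b ≤ T ^ |b| :=
    (rpow_le_rpow_of_exponent_le ht (le_abs_self b)).trans
      (rpow_le_rpow (by linarith) htT (abs_nonneg b))
  have hexp : exp (2 * c * t ^ a) ≤ exp (2 * c * T ^ a) := by gcongr
  exact mul_le_mul hpow hexp (exp_pos _).le (rpow_nonneg (by linarith) _)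

theorem log_sum_expWeight_add_two_le {a c : ℝ} (b : ℝ) (ha : 0 ≤ a) (hc : 0 ≤ c) {K : ℕ}
    (hK : 1 ≤ K) :
    log (∑ k ∈ Icc 1 K, expWeight a b c k + 2) ≤
      log 3 + (1 + |b|) * log K + 2 * c * (K : ℝ) ^ a := by
  have hK₁ : (1 : ℝ) ≤ K := by exact_mod_cast hK
  set X := (K : ℝ) * ((K : ℝ) ^ |b| * exp (2 * c * (K : ℝ) ^ a))
  have hX : 1 ≤ X := one_le_mul_of_one_le_of_one_le hK₁ <|
    one_le_mul_of_one_le_of_one_le (one_le_rpow hK₁ (abs_nonneg b)) (one_le_exp (by positivity))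
  have hsum : ∑ k ∈ Icc 1 K, expWeight a b c k ≤ X := by
    calc ∑ k ∈ Icc 1 K, expWeight a b c k
        ≤ #(Icc 1 K) • ((K : ℝ) ^ |b| * exp (2 * c * (K : ℝ) ^ a)) := by
          refine sum_le_card_nsmul _ _ _ fun k hk => ?_
          obtain ⟨hk₁, hkK⟩ := mem_Icc.mp hk
          exact expWeight_le ha hc (by exact_mod_cast hk₁) (by exact_mod_cast hkK)
      _ = X := by simp [X, nsmul_eq_mul]
  have hsum₀ : 0 ≤ ∑ k ∈ Icc 1 K, expWeight a b c k :=
    sum_nonneg fun k _ => expWeight_nonneg a b c (Nat.cast_nonneg k)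
  calc log (∑ k ∈ Icc 1 K, expWeight a b c k + 2) ≤ log (3 * X) :=
        log_le_log (by linarith) (by linarith)
    _ = log 3 + (1 + |b|) * log K + 2 * c * (K : ℝ) ^ a := by
        rw [log_mul (by norm_num) (by positivity), log_mul (by positivity) (by positivity),
          log_mul (by positivity) (exp_pos _).ne', log_rpow (by positivity), log_exp]
        ring

theorem exists_log_sum_expWeight_le {a c : ℝ} (b : ℝ) (ha : 0 < a) (hc : 0 < c) :
    ∃ C₀, 0 < C₀ ∧ ∀ K : ℕ, 1 ≤ K →
      log (∑ k ∈ Icc 1 K, expWeight a b c k + 2) ≤ C₀ * log (expWeight a b c K + 2) := by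
  obtain ⟨D, hD⟩ := exists_log_le_mul_rpow_add ha (ε := c / (1 + |b|)) (by positivity)
  set E := log 3 + 4 * (1 + |b|) * D
  have hlog2 := log_pos one_lt_two
  refine ⟨3 + |E| / log 2, by positivity, fun K hK => ?_⟩
  have hK₁ : (1 : ℝ) ≤ K := by exact_mod_cast hK
  have hlogK : 0 ≤ log K := log_nonneg hK₁
  set L := log (expWeight a b c K + 2)
  have hL : log 2 ≤ L := log_le_log (by norm_num)
    (by linarith [expWeight_nonneg a b c (Nat.cast_nonneg K)])
  -- `log K` is absorbed by `c K^a`, so both logarithms are comparable to `K^a`.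
  have habsorb : (1 + |b|) * log K ≤ c * (K : ℝ) ^ a + (1 + |b|) * D := by
    have := mul_le_mul_of_nonneg_left (hD K (by positivity)) (by positivity : 0 ≤ 1 + |b|)
    rwa [mul_add, ← mul_assoc, mul_div_cancel₀ _ (by positivity)] at this
  have hlower : b * log K + 2 * c * (K : ℝ) ^ a ≤ L := by
    rw [← log_expWeight a b c (by positivity)]
    exact log_le_log (expWeight_pos a b c (by positivity)) (by linarith)
  have hupper := log_sum_expWeight_add_two_le b ha.le hc.le hK
  have hbK : -|b| * log K ≤ b * log K := mul_le_mul_of_nonneg_right (neg_abs_le b) hlogK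
  have hE : E ≤ |E| / log 2 * L :=
    calc E ≤ |E| * 1 := by simpa using le_abs_self E
      _ ≤ |E| * (L / log 2) := by gcongr; exact (one_le_div hlog2).mpr hL
      _ = |E| / log 2 * L := by ring
  calc log (∑ k ∈ Icc 1 K, expWeight a b c k + 2) ≤ 3 * L + E := by linarith
    _ ≤ 3 * L + |E| / log 2 * L := by gcongr
    _ = (3 + |E| / log 2) * L := by ring

theorem rho_weighted_sum_le_general (a b c : ℝ) (ha0 : 0 < a) (hc : 0 < c) :
    ∃ C : ℝ, 0 < C ∧ ∀ x : ℕ → ℝ, (∀ k, |x k| ≤ 1) → ∀ K : ℕ, 1 ≤ K →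
      (∑ k ∈ Finset.Icc 1 K, ((k : ℝ) ^ b * Real.exp (2 * c * (k : ℝ) ^ a)) * (x k) ^ 2) *
          Real.log ((∑ k ∈ Finset.Icc 1 K,
            ((k : ℝ) ^ b * Real.exp (2 * c * (k : ℝ) ^ a)) * (x k) ^ 2) + 2)
        ≤ C * ∑ k ∈ Finset.Icc 1 K,
            (((k : ℝ) ^ b * Real.exp (2 * c * (k : ℝ) ^ a)) *
              Real.log (((k : ℝ) ^ b * Real.exp (2 * c * (k : ℝ) ^ a)) + 2)) * (x k) ^ 2 := by
  obtain ⟨C₀, hC₀, hlog⟩ := exists_log_sum_expWeight_le b ha0 hc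
  refine ⟨C₀ + 1 / log 2, by positivity, fun x hx K _ => ?_⟩
  exact sum_mul_log_sum_add_two_le (α := fun k => expWeight a b c k) (w := fun k => x k ^ 2)
    (fun k => expWeight_nonneg a b c (Nat.cast_nonneg k)) (fun k => sq_nonneg _)
    (fun k => (sq_le_one_iff_abs_le_one _).mpr (hx k)) hlog K

/-- Interpolation-type inequality for the convex Zygmund function `ρ(s)=s log(s+2)` applied to
weighted square sums with weights `α(k) = k^b exp(2c k^a)`: there is a constant `C` such that
for every sequence with `sup_k |x_k| ≤ 1` and every `K ≥ 1`,
`ρ(∑_{k=1}^K α(k) x_k²) ≤ C ∑_{k=1}^K ρ(α(k)) x_k²`. -/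
theorem rho_weighted_sum_le (a b c : ℝ) (ha0 : 0 < a) (ha1 : a ≤ 1) (hc : 0 < c) :
    ∃ C : ℝ, 0 < C ∧ ∀ x : ℕ → ℝ, (∀ k, |x k| ≤ 1) → ∀ K : ℕ, 1 ≤ K →
      (∑ k ∈ Finset.Icc 1 K, ((k : ℝ) ^ b * Real.exp (2 * c * (k : ℝ) ^ a)) * (x k) ^ 2) *
          Real.log ((∑ k ∈ Finset.Icc 1 K,
            ((k : ℝ) ^ b * Real.exp (2 * c * (k : ℝ) ^ a)) * (x k) ^ 2) + 2)
        ≤ C * ∑ k ∈ Finset.Icc 1 K,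
            (((k : ℝ) ^ b * Real.exp (2 * c * (k : ℝ) ^ a)) *
              Real.log (((k : ℝ) ^ b * Real.exp (2 * c * (k : ℝ) ^ a)) + 2)) * (x k) ^ 2 :=
  rho_weighted_sum_le_general a b c ha0 hc
end

section
/- Let f : [0,T] → ℝ be absolutely continuous with f(t) ∈ (0,1) for all t and |f'(t)| ≤ C f(t) |log f(t)| for a.e. t. Then for all t ∈ [0,T]: f(t) ≥ f(0)^{exp(Ct)}. -/
/-- Osgood–Gronwall lemma for the modulus `η(s) = s log(1/s)`: if `f : [0,T] → (0,1)` satisfies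
`|f'(t)| ≤ C f(t) |log f(t)|`, then `f(t) ≥ f(0)^{exp(Ct)}`. -/
theorem osgood_gronwall_log (T C : ℝ) (hT : 0 < T) (hC : 0 < C) (f f' : ℝ → ℝ)
    (hderiv : ∀ t ∈ Set.Icc (0 : ℝ) T, HasDerivWithinAt f (f' t) (Set.Icc (0 : ℝ) T) t)
    (hpos : ∀ t ∈ Set.Icc (0 : ℝ) T, f t ∈ Set.Ioo (0 : ℝ) 1)
    (hbound : ∀ t ∈ Set.Icc (0 : ℝ) T, |f' t| ≤ C * f t * |Real.log (f t)|) :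
    ∀ t ∈ Set.Icc (0 : ℝ) T, f t ≥ (f 0) ^ Real.exp (C * t) := by
  intro t ht
  have h0 : (0:ℝ) ∈ Set.Icc (0:ℝ) T := ⟨le_refl _, hT.le⟩
  set g : ℝ → ℝ := fun s => Real.log (-Real.log (f s)) with hg
  set g' : ℝ → ℝ := fun s => (-(f' s / f s)) / (-Real.log (f s)) with hg'
  have hgderiv : ∀ s ∈ Set.Icc (0:ℝ) T,
      HasDerivWithinAt g (g' s) (Set.Icc (0:ℝ) T) s := by
    intro s hs
    have hfs := hpos s hs
    have hlog : Real.log (f s) < 0 := Real.log_neg hfs.1 hfs.2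
    have h1 : HasDerivWithinAt (fun u => -Real.log (f u)) (-(f' s / f s))
        (Set.Icc (0:ℝ) T) s := ((hderiv s hs).log hfs.1.ne').neg
    exact h1.log (by linarith)
  have hgbound : ∀ s ∈ Set.Icc (0:ℝ) T, ‖g' s‖ ≤ C := by
    intro s hs
    have hfs := hpos s hs
    have hlog : Real.log (f s) < 0 := Real.log_neg hfs.1 hfs.2
    have hb := hbound s hs
    have h1 : |g' s| = |f' s| / (f s * |Real.log (f s)|) := by
      rw [hg']
      rw [abs_div, abs_neg, abs_div, abs_neg]
      rw [abs_of_pos hfs.1, div_div]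
    rw [Real.norm_eq_abs, h1]
    rw [div_le_iff₀ (mul_pos hfs.1 (abs_pos.2 hlog.ne))]
    calc |f' s| ≤ C * f s * |Real.log (f s)| := hb
      _ = C * (f s * |Real.log (f s)|) := by ring
  have key := (convex_Icc (0:ℝ) T).norm_image_sub_le_of_norm_hasDerivWithin_le
    hgderiv hgbound h0 ht
  have hkey : g t - g 0 ≤ C * t := by
    have : ‖g t - g 0‖ ≤ C * t := by
      simpa [sub_zero, abs_of_nonneg ht.1] using key
    calc g t - g 0 ≤ ‖g t - g 0‖ := le_abs_self _
      _ ≤ C * t := this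
  have hf0 := hpos 0 h0
  have hft := hpos t ht
  have hlog0 : Real.log (f 0) < 0 := Real.log_neg hf0.1 hf0.2
  have hlogt : Real.log (f t) < 0 := Real.log_neg hft.1 hft.2
  -- exponentiate: -log f t ≤ (-log f 0) * exp (C t)
  have h2 : -Real.log (f t) ≤ (-Real.log (f 0)) * Real.exp (C * t) := by
    have := Real.exp_le_exp.2 (show g t ≤ g 0 + C * t by linarith)
    rw [Real.exp_add, hg] at this
    rw [Real.exp_log (by linarith), Real.exp_log (by linarith)] at this
    exact this
  have h3 : Real.exp (C * t) * Real.log (f 0) ≤ Real.log (f t) := by nlinarith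
  calc (f 0) ^ Real.exp (C * t) = Real.exp (Real.exp (C * t) * Real.log (f 0)) := by
        rw [Real.rpow_def_of_pos hf0.1, mul_comm]
    _ ≤ Real.exp (Real.log (f t)) := Real.exp_le_exp.2 h3
    _ = f t := Real.exp_log hft.1
end

section
/- Let a ∈ (1/2,1), s > 0, C > 0, δ > 1/a with (a−1)δ + 1 > 0, and set d_n = 2^{n^δ}. Then for all t > 0 and n sufficiently large, log₂^a( (d_n/C) e^{tn/C} ) ≥ n^{δ a} + a 2^{a−1} n^{(a−1)δ + 1} · t/C, and consequently exp(s log₂^a((d_n/C) e^{tn/C} )) / exp(s n^{δ a}) → ∞ as n → ∞. -/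
open Filter


lemma concave_rpow_lower {a x y : ℝ} (ha0 : 0 ≤ a) (ha1 : a ≤ 1) (hy : 0 < y) (hxy : y ≤ x) :
    y ^ a + a * x ^ (a - 1) * (x - y) ≤ x ^ a := by
  have hx : 0 < x := hy.trans_le hxy
  have hs : -1 ≤ (y - x) / x := by
    rw [le_div_iff₀ hx]; linarith
  have h := rpow_one_add_le_one_add_mul_self hs ha0 ha1
  have h1 : (1 : ℝ) + (y - x) / x = y / x := by field_simp; ring
  rw [h1] at h
  rw [Real.div_rpow hy.le hx.le a] at h
  have hxa : (0 : ℝ) < x ^ a := Real.rpow_pos_of_pos hx a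
  have h3 : y ^ a ≤ x ^ a * (1 + a * ((y - x) / x)) := by
    rw [div_le_iff₀ hxa] at h
    linarith [h]
  have e : x ^ (a - 1) = x ^ a / x := by
    rw [Real.rpow_sub hx, Real.rpow_one]
  rw [e]
  have hx0 : x ≠ 0 := hx.ne'
  have e2 : x ^ a * (1 + a * ((y - x) / x)) = x ^ a + a * (x ^ a / x) * (y - x) := by
    field_simp
  rw [e2] at h3
  linarith

/-- Growth computation at the heart of the norm-inflation argument: for `a ∈ (1/2,1)`, `s > 0`,
`C > 0`, `δ > 1/a` with `(a−1)δ + 1 > 0`, and `d_n = 2^{n^δ}`, for every `t > 0` and all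
sufficiently large `n`,
`log₂^a((d_n/C) e^{tn/C}) ≥ n^{δa} + a 2^{a−1} n^{(a−1)δ+1} t/C`, and consequently
`exp(s log₂^a((d_n/C) e^{tn/C})) / exp(s n^{δa}) → ∞`. -/
theorem norm_inflation_growth (a s C δ : ℝ) (ha : 1 / 2 < a) (ha1 : a < 1) (hs : 0 < s)
    (hC : 0 < C) (hδ : 1 / a < δ) (hδ2 : (a - 1) * δ + 1 > 0) :
    ∀ t : ℝ, 0 < t →
      (∃ N : ℕ, ∀ n : ℕ, N ≤ n →
        (Real.logb 2 (((2 : ℝ) ^ ((n : ℝ) ^ δ) / C) * Real.exp (t * n / C))) ^ a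
          ≥ (n : ℝ) ^ (δ * a) + a * 2 ^ (a - 1) * (n : ℝ) ^ ((a - 1) * δ + 1) * t / C) ∧
      Tendsto (fun n : ℕ =>
          Real.exp (s * (Real.logb 2 (((2 : ℝ) ^ ((n : ℝ) ^ δ) / C) *
            Real.exp (t * n / C))) ^ a) / Real.exp (s * (n : ℝ) ^ (δ * a)))
        atTop atTop := by
  intro t ht
  have ha0 : 0 < a := by linarith
  have hlog2 : 0 < Real.log 2 := Real.log_pos one_lt_two
  have hlog2' : Real.log 2 < 1 := by
    have := Real.log_two_lt_d9; linarith
  set b : ℝ := Real.logb 2 C with hb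
  set c : ℝ := t / (C * Real.log 2) with hc
  have hct : t / C < c := by
    rw [hc, div_lt_div_iff₀ (by positivity) (by positivity)]
    nlinarith [mul_pos ht hC]
  have hδ1 : 1 < δ := lt_trans (by rw [lt_div_iff₀ ha0]; linarith) hδ
  -- rewrite the logb expression
  have hlog : ∀ n : ℕ, 0 < (n : ℝ) →
      Real.logb 2 (((2 : ℝ) ^ ((n : ℝ) ^ δ) / C) * Real.exp (t * n / C))
        = (n : ℝ) ^ δ + (c * n - b) := by
    intro n hn
    have h1 : ((2 : ℝ) ^ ((n : ℝ) ^ δ) / C) ≠ 0 := by positivity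
    have h2 : Real.exp (t * n / C) ≠ 0 := (Real.exp_pos _).ne'
    rw [Real.logb_mul h1 h2, Real.logb_div (by positivity) hC.ne',
      Real.logb_rpow (by norm_num) (by norm_num)]
    have : Real.logb 2 (Real.exp (t * n / C)) = c * n := by
      rw [Real.logb, Real.log_exp, hc]
      field_simp
    rw [this]; ring
  -- key eventual inequality
  have Hmain : ∀ᶠ n : ℕ in atTop,
      (Real.logb 2 (((2 : ℝ) ^ ((n : ℝ) ^ δ) / C) * Real.exp (t * n / C))) ^ a
        ≥ (n : ℝ) ^ (δ * a) + a * 2 ^ (a - 1) * (n : ℝ) ^ ((a - 1) * δ + 1) * t / C := by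
    have h1 : ∀ᶠ n : ℕ in atTop, (1 : ℝ) ≤ (n : ℝ) := by
      filter_upwards [eventually_ge_atTop 1] with n hn
      exact_mod_cast hn
    have h2 : ∀ᶠ n : ℕ in atTop, b ≤ (c - t / C) * n := by
      have h := (tendsto_natCast_atTop_atTop (R := ℝ)).const_mul_atTop
        (by linarith : (0:ℝ) < c - t / C)
      exact h.eventually_ge_atTop b
    have h3 : ∀ᶠ n : ℕ in atTop, c + |b| ≤ (n : ℝ) ^ (δ - 1) := by
      have h := (tendsto_rpow_atTop (by linarith : 0 < δ - 1)).comp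
        (tendsto_natCast_atTop_atTop (R := ℝ))
      exact h.eventually_ge_atTop (c + |b|)
    filter_upwards [h1, h2, h3] with n hn1 hn2 hn3
    have hnpos : (0 : ℝ) < n := by linarith
    have hn3' : c * n - b ≤ (n : ℝ) ^ δ := by
      have e : (n : ℝ) ^ δ = (n : ℝ) ^ (δ - 1) * n := by
        rw [← Real.rpow_add_one hnpos.ne' (δ - 1)]; ring_nf
      rw [e]
      nlinarith [abs_nonneg b, le_abs_self b, neg_abs_le b]
    set y : ℝ := (n : ℝ) ^ δ with hy
    set x : ℝ := (n : ℝ) ^ δ + (c * n - b) with hx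
    have hd : t * n / C ≤ c * n - b := by
      have : (c - t / C) * n = c * n - (t / C) * n := by ring
      rw [this] at hn2
      have : t * n / C = (t / C) * n := by ring
      linarith
    have hd0 : 0 ≤ c * n - b := le_trans (by positivity) hd
    have hypos : 0 < y := Real.rpow_pos_of_pos hnpos δ
    have hxy : y ≤ x := by rw [hx]; linarith
    have hx2y : x ≤ 2 * y := by rw [hx, hy]; linarith
    rw [hlog n hnpos]
    have key := concave_rpow_lower ha0.le ha1.le hypos hxy
    have hya : y ^ a = (n : ℝ) ^ (δ * a) := (Real.rpow_mul hnpos.le δ a).symm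
    have hxpos : 0 < x := hypos.trans_le hxy
    have hx1 : (2 * y) ^ (a - 1) ≤ x ^ (a - 1) :=
      Real.rpow_le_rpow_of_nonpos hxpos hx2y (by linarith)
    have h2y : (2 * y) ^ (a - 1) = 2 ^ (a - 1) * (n : ℝ) ^ (δ * (a - 1)) := by
      rw [Real.mul_rpow (by norm_num) hypos.le]
      congr 1
      rw [hy]
      exact (Real.rpow_mul hnpos.le δ (a - 1)).symm
    have hpow : (n : ℝ) ^ ((a - 1) * δ + 1) = (n : ℝ) ^ (δ * (a - 1)) * n := by
      rw [Real.rpow_add hnpos, Real.rpow_one, mul_comm (a - 1) δ]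
    have hx1' : 2 ^ (a - 1) * (n : ℝ) ^ (δ * (a - 1)) ≤ x ^ (a - 1) := h2y ▸ hx1
    have hxy' : t * n / C ≤ x - y :=
      hd.trans_eq (by rw [hx, hy]; ring)
    have htn : 0 ≤ t * n / C := by positivity
    have hprod : a * (2 ^ (a - 1) * (n : ℝ) ^ (δ * (a - 1))) * (t * n / C)
        ≤ a * x ^ (a - 1) * (x - y) := by
      have h0 : (0:ℝ) ≤ 2 ^ (a - 1) * (n : ℝ) ^ (δ * (a - 1)) := by positivity
      gcongr
    rw [ge_iff_le]
    calc (n : ℝ) ^ (δ * a) + a * 2 ^ (a - 1) * (n : ℝ) ^ ((a - 1) * δ + 1) * t / C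
        = y ^ a + a * (2 ^ (a - 1) * (n : ℝ) ^ (δ * (a - 1))) * (t * n / C) := by
          rw [hya, hpow]; ring
      _ ≤ y ^ a + a * x ^ (a - 1) * (x - y) := by linarith
      _ ≤ x ^ a := key
  refine ⟨?_, ?_⟩
  · obtain ⟨N, hN⟩ := eventually_atTop.mp Hmain
    exact ⟨N, hN⟩
  · have hβ : (0 : ℝ) < (a - 1) * δ + 1 := hδ2
    have hK : (0 : ℝ) < s * (a * 2 ^ (a - 1) * t / C) := by positivity
    have htend : Tendsto (fun n : ℕ =>
        Real.exp (s * (a * 2 ^ (a - 1) * t / C) * (n : ℝ) ^ ((a - 1) * δ + 1)))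
        atTop atTop := by
      refine Real.tendsto_exp_atTop.comp ?_
      exact ((tendsto_rpow_atTop hβ).comp
        (tendsto_natCast_atTop_atTop (R := ℝ))).const_mul_atTop hK
    refine tendsto_atTop_mono' atTop ?_ htend
    filter_upwards [Hmain] with n hn
    rw [le_div_iff₀ (Real.exp_pos _), ← Real.exp_add, Real.exp_le_exp]
    have h' := mul_le_mul_of_nonneg_left hn hs.le
    have e : s * ((n : ℝ) ^ (δ * a) + a * 2 ^ (a - 1) * (n : ℝ) ^ ((a - 1) * δ + 1) * t / C)
        = s * (a * 2 ^ (a - 1) * t / C) * (n : ℝ) ^ ((a - 1) * δ + 1) + s * (n : ℝ) ^ (δ * a) := by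
      ring
    rw [e] at h'
    exact h'
end

section
/- Let m(k) = exp(2 s k^a) with a ∈ (0,1] and s > 0. Then for every j ≥ 1: ∑_{l ≥ 1} (j+l)^{−a} m(j+l) 2^{−2(j+l)} ≤ C j^{−a} m(j) 2^{−2j}, with C depending only on a and s. -/
open Real Filter Asymptotics

private lemma rpow_subadd {a : ℝ} (ha0 : 0 ≤ a) (ha1 : a ≤ 1) {x y : ℝ}
    (hx : 0 ≤ x) (hy : 0 ≤ y) : (x + y) ^ a ≤ x ^ a + y ^ a := by
  lift x to NNReal using hx
  lift y to NNReal using hy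
  have := NNReal.rpow_add_le_add_rpow x y ha0 ha1
  exact_mod_cast this

/-- summability of the comparison weights when `a < 1` -/
private lemma F_summable_of_lt_one {a s : ℝ} (ha0 : 0 < a) (ha1 : a < 1) (hs : 0 < s) :
    Summable (fun l : ℕ => Real.exp (2 * s * ((l : ℝ) + 1) ^ a) *
      (2 : ℝ) ^ (-(2 : ℝ) * ((l : ℝ) + 1))) := by
  have hgeo : Summable (fun l : ℕ => (1 / 2 : ℝ) ^ l) :=
    summable_geometric_of_lt_one (by norm_num) (by norm_num)
  refine summable_of_isBigO_nat hgeo (IsBigO.of_bound 1 ?_)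
  have ht : Tendsto (fun l : ℕ => ((l : ℝ) + 1) ^ (1 - a)) atTop atTop :=
    (tendsto_rpow_atTop (by linarith)).comp
      (tendsto_atTop_add_const_right _ 1 tendsto_natCast_atTop_atTop)
  filter_upwards [ht.eventually_ge_atTop (2 * s / Real.log 2)] with l hl
  set y : ℝ := (l : ℝ) + 1 with hy
  have hy0 : (0 : ℝ) < y := by positivity
  have hlog2 : (0 : ℝ) < Real.log 2 := Real.log_pos (by norm_num)
  have h1 : 2 * s ≤ y ^ (1 - a) * Real.log 2 := by
    rw [div_le_iff₀ hlog2] at hl; linarith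
  have h2 : 2 * s * y ^ a ≤ Real.log 2 * y := by
    have hya : (0 : ℝ) < y ^ a := Real.rpow_pos_of_pos hy0 a
    calc 2 * s * y ^ a ≤ y ^ (1 - a) * Real.log 2 * y ^ a :=
          mul_le_mul_of_nonneg_right h1 hya.le
      _ = Real.log 2 * (y ^ (1 - a) * y ^ a) := by ring
      _ = Real.log 2 * y := by
          rw [← Real.rpow_add hy0, sub_add_cancel, Real.rpow_one]
  have h3 : Real.exp (2 * s * y ^ a) ≤ (2 : ℝ) ^ y := by
    rw [Real.rpow_def_of_pos (by norm_num : (0:ℝ) < 2)]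
    exact Real.exp_le_exp.2 (by linarith [h2])
  have h4 : Real.exp (2 * s * y ^ a) * (2 : ℝ) ^ (-(2 : ℝ) * y) ≤ (2 : ℝ) ^ (-(l : ℝ)) := by
    have : (2 : ℝ) ^ y * (2 : ℝ) ^ (-(2 : ℝ) * y) = (2 : ℝ) ^ (-y) := by
      rw [← Real.rpow_add (by norm_num : (0:ℝ) < 2)]; ring_nf
    calc Real.exp (2 * s * y ^ a) * (2 : ℝ) ^ (-(2 : ℝ) * y)
        ≤ (2 : ℝ) ^ y * (2 : ℝ) ^ (-(2 : ℝ) * y) :=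
          mul_le_mul_of_nonneg_right h3 (Real.rpow_nonneg (by norm_num) _)
      _ = (2 : ℝ) ^ (-y) := this
      _ ≤ (2 : ℝ) ^ (-(l : ℝ)) :=
          Real.rpow_le_rpow_of_exponent_le (by norm_num) (by rw [hy]; linarith)
  have h5 : (2 : ℝ) ^ (-(l : ℝ)) = (1 / 2 : ℝ) ^ l := by
    rw [Real.rpow_neg (by norm_num), Real.rpow_natCast, one_div, inv_pow]
  rw [Real.norm_eq_abs, Real.norm_eq_abs, one_mul]
  have hpos : (0:ℝ) ≤ Real.exp (2 * s * y ^ a) * (2 : ℝ) ^ (-(2 : ℝ) * y) := by positivity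
  rw [abs_of_nonneg hpos, abs_of_nonneg (by positivity : (0:ℝ) ≤ (1/2:ℝ)^l)]
  rw [← h5]; exact h4

/-- summability of the comparison weights when `a = 1` and `2 s < 2 log 2` -/
private lemma F_summable_of_small {s : ℝ} (hc : 2 * s - 2 * Real.log 2 < 0) :
    Summable (fun l : ℕ => Real.exp (2 * s * ((l : ℝ) + 1) ^ (1:ℝ)) *
      (2 : ℝ) ^ (-(2 : ℝ) * ((l : ℝ) + 1))) := by
  set c : ℝ := 2 * s - 2 * Real.log 2 with hcdef
  have key : ∀ l : ℕ, Real.exp (2 * s * ((l : ℝ) + 1) ^ (1:ℝ)) *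
      (2 : ℝ) ^ (-(2 : ℝ) * ((l : ℝ) + 1)) = Real.exp ((l : ℝ) * c) * Real.exp c := by
    intro l
    rw [Real.rpow_one, Real.rpow_def_of_pos (by norm_num : (0:ℝ) < 2), ← Real.exp_add,
      ← Real.exp_add]
    congr 1; rw [hcdef]; ring
  simp only [key]
  exact (Real.summable_exp_nat_mul_iff.mpr hc).mul_right _

/-- Tail-summation estimate for the weights `k^{−a} exp(2s k^a) 2^{−2k}`: for `m(k) = exp(2s k^a)`
with `a ∈ (0,1]`, `s > 0`, there is `C` such that for every `j ≥ 1`,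
`∑_{l ≥ 1} (j+l)^{−a} m(j+l) 2^{−2(j+l)} ≤ C j^{−a} m(j) 2^{−2j}`. -/
theorem tail_sum_estimate (a s : ℝ) (ha0 : 0 < a) (ha1 : a ≤ 1) (hs : 0 < s) :
    ∃ C : ℝ, 0 < C ∧ ∀ j : ℕ, 1 ≤ j →
      (∑' l : ℕ, ((j : ℝ) + (l : ℝ) + 1) ^ (-a) *
          Real.exp (2 * s * ((j : ℝ) + (l : ℝ) + 1) ^ a) *
          (2 : ℝ) ^ (-(2 : ℝ) * ((j : ℝ) + (l : ℝ) + 1)))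
        ≤ C * (j : ℝ) ^ (-a) * Real.exp (2 * s * (j : ℝ) ^ a) *
            (2 : ℝ) ^ (-(2 : ℝ) * (j : ℝ)) := by
  set F : ℕ → ℝ := fun l => Real.exp (2 * s * ((l : ℝ) + 1) ^ a) *
      (2 : ℝ) ^ (-(2 : ℝ) * ((l : ℝ) + 1)) with hFdef
  set T : ℕ → ℕ → ℝ := fun j l => ((j : ℝ) + (l : ℝ) + 1) ^ (-a) *
          Real.exp (2 * s * ((j : ℝ) + (l : ℝ) + 1) ^ a) *
          (2 : ℝ) ^ (-(2 : ℝ) * ((j : ℝ) + (l : ℝ) + 1)) with hTdef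
  set B : ℕ → ℝ := fun j => (j : ℝ) ^ (-a) * Real.exp (2 * s * (j : ℝ) ^ a) *
      (2 : ℝ) ^ (-(2 : ℝ) * (j : ℝ)) with hBdef
  have hB0 : ∀ j : ℕ, 0 ≤ B j := fun j => by
    simp only [hBdef]; positivity
  have hF0 : ∀ l : ℕ, 0 ≤ F l := fun l => by
    simp only [hFdef]; positivity
  have hT0 : ∀ j l : ℕ, 0 ≤ T j l := fun j l => by
    simp only [hTdef]; positivity
  -- pointwise key bound
  have key : ∀ j l : ℕ, 1 ≤ j → T j l ≤ B j * F l := by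
    intro j l hj
    have hx : (1 : ℝ) ≤ (j : ℝ) := by exact_mod_cast hj
    have hx0 : (0 : ℝ) < (j : ℝ) := by linarith
    set y : ℝ := (l : ℝ) + 1 with hy
    have hy0 : (0 : ℝ) < y := by positivity
    have h1 : ((j : ℝ) + (l : ℝ) + 1) ^ (-a) ≤ (j : ℝ) ^ (-a) := by
      have : (j : ℝ) + (l : ℝ) + 1 = (j : ℝ) + y := by rw [hy]; ring
      rw [this]
      exact Real.rpow_le_rpow_of_nonpos hx0 (by linarith) (by linarith)
    have h2 : Real.exp (2 * s * ((j : ℝ) + (l : ℝ) + 1) ^ a)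
        ≤ Real.exp (2 * s * (j : ℝ) ^ a) * Real.exp (2 * s * y ^ a) := by
      rw [← Real.exp_add]
      apply Real.exp_le_exp.2
      have hsub : ((j : ℝ) + y) ^ a ≤ (j : ℝ) ^ a + y ^ a :=
        rpow_subadd ha0.le ha1 hx0.le hy0.le
      have heq : (j : ℝ) + (l : ℝ) + 1 = (j : ℝ) + y := by rw [hy]; ring
      rw [heq]
      nlinarith [hsub, hs]
    have h3 : (2 : ℝ) ^ (-(2 : ℝ) * ((j : ℝ) + (l : ℝ) + 1))
        = (2 : ℝ) ^ (-(2 : ℝ) * (j : ℝ)) * (2 : ℝ) ^ (-(2 : ℝ) * y) := by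
      rw [← Real.rpow_add (by norm_num : (0:ℝ) < 2)]
      congr 1; rw [hy]; ring
    calc T j l = ((j : ℝ) + (l : ℝ) + 1) ^ (-a) *
          Real.exp (2 * s * ((j : ℝ) + (l : ℝ) + 1) ^ a) *
          ((2 : ℝ) ^ (-(2 : ℝ) * (j : ℝ)) * (2 : ℝ) ^ (-(2 : ℝ) * y)) := by
            rw [hTdef]; simp only []; rw [h3]
      _ ≤ (j : ℝ) ^ (-a) * (Real.exp (2 * s * (j : ℝ) ^ a) * Real.exp (2 * s * y ^ a)) *
          ((2 : ℝ) ^ (-(2 : ℝ) * (j : ℝ)) * (2 : ℝ) ^ (-(2 : ℝ) * y)) := by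
            apply mul_le_mul_of_nonneg_right _ (by positivity)
            exact mul_le_mul h1 h2 (Real.exp_nonneg _) (Real.rpow_nonneg hx0.le _)
      _ = B j * F l := by rw [hBdef, hFdef]; simp only []; ring
  by_cases hF : Summable F
  · -- main case
    refine ⟨∑' l, F l + 1, ?_, fun j hj => ?_⟩
    · have : 0 ≤ ∑' l, F l := tsum_nonneg hF0
      linarith
    · have hsum2 : Summable (fun l => B j * F l) := hF.mul_left _
      have hsum1 : Summable (fun l => T j l) :=
        Summable.of_nonneg_of_le (hT0 j) (fun l => key j l hj) hsum2
      have h1 : (∑' l, T j l) ≤ ∑' l, B j * F l :=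
        Summable.tsum_le_tsum (fun l => key j l hj) hsum1 hsum2
      have h2 : (∑' l, B j * F l) = B j * ∑' l, F l := tsum_mul_left
      have h3 : B j * (∑' l, F l) ≤ (∑' l, F l + 1) * B j := by
        have := hB0 j
        nlinarith
    -- conclude
      calc (∑' l, T j l) ≤ B j * ∑' l, F l := by rw [← h2]; exact h1
        _ ≤ (∑' l, F l + 1) * B j := h3
        _ = (∑' l, F l + 1) * (j : ℝ) ^ (-a) * Real.exp (2 * s * (j : ℝ) ^ a) *
            (2 : ℝ) ^ (-(2 : ℝ) * (j : ℝ)) := by rw [hBdef]; ring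
  · -- degenerate case: a = 1 and 2 log 2 ≤ 2 s; the LHS series diverges, so tsum = 0
    have haeq : a = 1 := by
      by_contra h
      exact hF (F_summable_of_lt_one ha0 (lt_of_le_of_ne ha1 h) hs)
    have hlog : 2 * Real.log 2 ≤ 2 * s := by
      by_contra h
      push_neg at h
      apply hF
      rw [hFdef, haeq]
      exact F_summable_of_small (by linarith)
    refine ⟨1, one_pos, fun j hj => ?_⟩
    have hx : (1 : ℝ) ≤ (j : ℝ) := by exact_mod_cast hj
    have hnot : ¬ Summable (fun l => T j l) := by
      intro hsum
      have hbound : ∀ l : ℕ, ((l + (j + 1) : ℕ) : ℝ)⁻¹ ≤ T j l := by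
        intro l
        set k : ℝ := (j : ℝ) + (l : ℝ) + 1 with hk
        have hk1 : (1 : ℝ) ≤ k := by rw [hk]; have : (0:ℝ) ≤ (l:ℝ) := Nat.cast_nonneg l; linarith
        have hk0 : (0 : ℝ) < k := by linarith
        have hexp : (1 : ℝ) ≤ Real.exp (2 * s * k ^ a) * (2 : ℝ) ^ (-(2 : ℝ) * k) := by
          rw [haeq, Real.rpow_one, Real.rpow_def_of_pos (by norm_num : (0:ℝ) < 2),
            ← Real.exp_add]
          rw [show (1 : ℝ) = Real.exp 0 by rw [Real.exp_zero]]
          apply Real.exp_le_exp.2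
          have : 0 ≤ (2 * s - 2 * Real.log 2) * k := by
            apply mul_nonneg (by linarith) hk0.le
          nlinarith
        have hcast : ((l + (j + 1) : ℕ) : ℝ) = k := by rw [hk]; push_cast; ring
        have hTeq : T j l = k ^ (-a) * (Real.exp (2 * s * k ^ a) *
            (2 : ℝ) ^ (-(2 : ℝ) * k)) := by rw [hTdef]; simp only []; rw [← hk]; ring
        have hka : k ^ (-a) = k⁻¹ := by rw [haeq]; simp [Real.rpow_neg_one]
        rw [hTeq, hka, hcast]
        calc k⁻¹ = k⁻¹ * 1 := by ring
          _ ≤ k⁻¹ * (Real.exp (2 * s * k ^ a) * (2 : ℝ) ^ (-(2 : ℝ) * k)) :=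
            mul_le_mul_of_nonneg_left hexp (by positivity)
      have hsum' : Summable (fun l : ℕ => ((l + (j + 1) : ℕ) : ℝ)⁻¹) :=
        Summable.of_nonneg_of_le (fun l => by positivity) hbound hsum
      have := (_root_.summable_nat_add_iff (f := fun n : ℕ => ((n : ℕ) : ℝ)⁻¹) (j + 1)).mp hsum'
      exact Real.not_summable_natCast_inv this
    rw [tsum_eq_zero_of_not_summable hnot]
    positivity
end
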